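/- Let G be a well-covered graph with α(G) ≥ 2, let y, z be two nonadjacent vertices with N_G(z) ⊆ N_G(y) and N_G(z) ≠ ∅, and let w ∈ N_G(z). Then α(G_{yw}) ≤ α(G) − 2, where G_{yw} = G \ (N_G(y) ∪ N_G(w)). -/

import Mathlib

open Finset

section EdgeIdealPaper

variable {V : Type*} [Fintype V] [DecidableEq V]

/-- `S` is an independent set of vertices in `G`. -/
def IsIndep (G : SimpleGraph V) (S : Finset V) : Prop :=
  ∀ u ∈ S, ∀ v ∈ S, ¬ G.Adj u v

/-- `S` is a maximal independent set of the induced subgraph of `G` on `A`. -/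
def IsMaxIndepIn (G : SimpleGraph V) (A S : Finset V) : Prop :=
  S ⊆ A ∧ IsIndep G S ∧ ∀ v ∈ A, v ∉ S → ¬ IsIndep G (insert v S)

open scoped Classical in
/-- The independence number of the induced subgraph of `G` on `A`. -/
noncomputable def alphaIn (G : SimpleGraph V) (A : Finset V) : ℕ :=
  ((A.powerset).filter (fun S => IsIndep G S)).sup Finset.card

/-- The induced subgraph of `G` on `A` is well-covered. -/
def WellCoveredIn (G : SimpleGraph V) (A : Finset V) : Prop :=
  ∀ S, IsMaxIndepIn G A S → S.card = alphaIn G A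

/-- The induced subgraph of `G` on `A` is in the class `W₂`. -/
def W2In (G : SimpleGraph V) (A : Finset V) : Prop :=
  WellCoveredIn G A ∧
    ∀ x ∈ A, WellCoveredIn G (A.erase x) ∧ alphaIn G (A.erase x) = alphaIn G A

open scoped Classical in
/-- The neighborhood of a vertex `a` in `G`, as a `Finset`. -/
noncomputable def nbr (G : SimpleGraph V) (a : V) : Finset V :=
  univ.filter (fun v => G.Adj a v)

open scoped Classical in
/-- The neighborhood `N_G(S)` of a set `S` of vertices: vertices outside `S`
adjacent to some vertex of `S`. -/
noncomputable def nbrSet (G : SimpleGraph V) (S : Finset V) : Finset V :=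
  univ.filter (fun v => v ∉ S ∧ ∃ u ∈ S, G.Adj u v)

/-- The vertex set of the localization `G_S = G \ (S ∪ N_G(S))`. -/
noncomputable def loc (G : SimpleGraph V) (S : Finset V) : Finset V :=
  univ \ (S ∪ nbrSet G S)

/-- The vertex set of `G_{ab} = G \ (N_G(a) ∪ N_G(b))`. -/
noncomputable def locE (G : SimpleGraph V) (a b : V) : Finset V :=
  univ \ (nbr G a ∪ nbr G b)

/-- The induced subgraph of `G` on `A` has no isolated vertices. -/
def NoIsolatedIn (G : SimpleGraph V) (A : Finset V) : Prop :=
  ∀ v ∈ A, ∃ u ∈ A, G.Adj v u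

open scoped Classical in
/-- The reduced Euler characteristic `∑_{F} (-1)^{|F|-1}` (the empty face
contributing `-1`) of the independence complex of the induced subgraph of `G` on `A`. -/
noncomputable def indEuler (G : SimpleGraph V) (A : Finset V) : ℤ :=
  -∑ S ∈ (A.powerset).filter (fun S => IsIndep G S), (-1 : ℤ) ^ S.card

end EdgeIdealPaper

/-!
A maximum independent set `S` of `G_{yw}` avoids `N(y)`, hence also `N(z) ⊆ N(y)`, and it
contains neither `y` nor `z`, both being neighbours of `w`. So `S ∪ {y, z}` is an independent
set of `G` with two more vertices than `S`.
-/

section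

variable {V : Type*}

theorem IsIndep.insert [DecidableEq V] {G : SimpleGraph V} {S : Finset V} {v : V}
    (hS : IsIndep G S) (hv : ∀ s ∈ S, ¬ G.Adj v s) : IsIndep G (insert v S) := by
  intro a ha b hb hab
  rcases Finset.mem_insert.1 ha with rfl | haS <;> rcases Finset.mem_insert.1 hb with rfl | hbS
  · exact G.irrefl hab
  · exact hv b hbS hab
  · exact hv a haS hab.symm
  · exact hS a haS b hbS hab

theorem card_le_alphaIn {G : SimpleGraph V} {A S : Finset V} (hSA : S ⊆ A)
    (hS : IsIndep G S) : S.card ≤ alphaIn G A := by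
  classical
  unfold alphaIn
  convert Finset.le_sup (f := Finset.card) (Finset.mem_filter.2 ⟨Finset.mem_powerset.2 hSA, hS⟩)

theorem exists_isIndep_card_eq_alphaIn (G : SimpleGraph V) (A : Finset V) :
    ∃ S ⊆ A, IsIndep G S ∧ S.card = alphaIn G A := by
  classical
  obtain ⟨S, hS, hcard⟩ := Finset.exists_mem_eq_sup
    ((A.powerset).filter (fun S => IsIndep G S))
    ⟨∅, Finset.mem_filter.2 ⟨Finset.empty_mem_powerset A, by simp [IsIndep]⟩⟩ Finset.card
  rw [Finset.mem_filter, Finset.mem_powerset] at hS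
  refine ⟨S, hS.1, hS.2, ?_⟩
  rw [← hcard, alphaIn]

theorem mem_nbr [Fintype V] {G : SimpleGraph V} {a v : V} : v ∈ nbr G a ↔ G.Adj a v := by
  simp [nbr]

end

section EdgeIdealPaper

variable {V : Type*} [Fintype V] [DecidableEq V]

theorem mem_locE {G : SimpleGraph V} {a b v : V} :
    v ∈ locE G a b ↔ ¬ G.Adj a v ∧ ¬ G.Adj b v := by
  simp [locE, mem_nbr, not_or]

theorem stmt18_general (G : SimpleGraph V)
    (y z : V) (hne : y ≠ z) (hadj : ¬ G.Adj y z)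
    (hsub : nbr G z ⊆ nbr G y)
    (w : V) (hw : w ∈ nbr G z) :
    alphaIn G (locE G y w) ≤ alphaIn G Finset.univ - 2 := by
  obtain ⟨S, hSloc, hS, hcard⟩ := exists_isIndep_card_eq_alphaIn G (locE G y w)
  have hyS : ∀ s ∈ S, ¬ G.Adj y s := fun s hs => (mem_locE.1 (hSloc hs)).1
  have hwS : ∀ s ∈ S, ¬ G.Adj w s := fun s hs => (mem_locE.1 (hSloc hs)).2
  have hzS : ∀ s ∈ S, ¬ G.Adj z s := fun s hs hzs => hyS s hs (mem_nbr.1 (hsub (mem_nbr.2 hzs)))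
  have hzw : G.Adj z w := mem_nbr.1 hw
  have hyw : G.Adj y w := mem_nbr.1 (hsub hw)
  have hT : IsIndep G (insert y (insert z S)) :=
    (hS.insert hzS).insert <| by
      simpa only [Finset.mem_insert, forall_eq_or_imp] using ⟨hadj, hyS⟩
  have hTcard : (insert y (insert z S)).card = S.card + 2 := by
    rw [Finset.card_insert_of_notMem, Finset.card_insert_of_notMem fun h => hwS z h hzw.symm]
    simpa [hne] using fun h => hwS y h hyw.symm
  have hle := card_le_alphaIn (Finset.subset_univ _) hT
  omega

/-- If `G` is well-covered with `α(G) ≥ 2`, `y, z` are nonadjacent vertices with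
`∅ ≠ N_G(z) ⊆ N_G(y)`, and `w ∈ N_G(z)`, then `α(G_{yw}) ≤ α(G) - 2`. -/
theorem stmt18 (G : SimpleGraph V) (hwc : WellCoveredIn G Finset.univ)
    (hα : 2 ≤ alphaIn G Finset.univ)
    (y z : V) (hne : y ≠ z) (hadj : ¬ G.Adj y z)
    (hsub : nbr G z ⊆ nbr G y) (hz : nbr G z ≠ ∅)
    (w : V) (hw : w ∈ nbr G z) :
    alphaIn G (locE G y w) ≤ alphaIn G Finset.univ - 2 :=
  stmt18_general G y z hne hadj hsub w hw

end EdgeIdealPaper
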